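/- Let μ and ν be probability measures on ℝ^d with finite first moments, and let F : ℝ^d × ℝ^d → ℝ^d satisfy: (i) for every x, the map z ↦ F(x,z) is Lipschitz with constant c₁(1 + ‖x‖); (ii) for every z, the map x ↦ F(x,z) is Lipschitz with constant c₂(1 + ‖z‖). Define T_μ(x) = x + ε E_{X'∼μ}[F(X', x)] and T_ν(z) = z + ε E_{X'∼ν}[F(X', z)], and let Φ(μ), Φ(ν) be the pushforwards of μ, ν under T_μ, T_ν respectively. Then W₁(Φ(μ), Φ(ν)) ≤ W₁(μ, ν) · (1 + ε c₁(1 + μ(‖·‖)) + ε c₂(1 + ν(‖·‖))), where W₁ is the 1-Wasserstein distance and μ(‖·‖) = ∫‖x‖ dμ(x). -/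

import Mathlib

/-!
Fix any coupling π of (μ, ν) and write A_ρ z = ∫ F(x', z) dρ(x'). The image of π under
Tμ × Tν couples Φ(μ) and Φ(ν), and pointwise
‖Tμ x - Tν z‖ ≤ ‖x - z‖ + ε ‖A_μ x - A_μ z‖ + ε ‖A_μ z - A_ν z‖.
Hypothesis (i), averaged over μ, bounds the first difference by c₁ (1 + μ(‖·‖)) ‖x - z‖;
hypothesis (ii), integrated along π, bounds the second by c₂ (1 + ‖z‖) times the cost of π.
Integrating against π bounds the cost of the image coupling by the factor times the cost of π,
and taking the infimum over π gives the claim.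
-/

open MeasureTheory

/-- The 1-Wasserstein distance, defined as the infimum of transport costs over couplings. -/
noncomputable def W1 {d : ℕ} (μ ν : Measure (EuclideanSpace ℝ (Fin d))) : ℝ :=
  sInf {c | ∃ π : Measure (EuclideanSpace ℝ (Fin d) × EuclideanSpace ℝ (Fin d)),
    IsProbabilityMeasure π ∧ π.map Prod.fst = μ ∧ π.map Prod.snd = ν ∧
    (∫ p, ‖p.1 - p.2‖ ∂π) = c}

section Lipschitz

variable {E G : Type*} [NormedAddCommGroup E] [NormedAddCommGroup G] {g : E → G} {L : ℝ}

theorem continuous_of_norm_sub_le (h : ∀ x y, ‖g x - g y‖ ≤ L * ‖x - y‖) : Continuous g :=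
  (LipschitzWith.of_dist_le' (K := L) (by simpa only [dist_eq_norm] using h)).continuous

variable [MeasurableSpace E] [BorelSpace E] [SecondCountableTopology E]

theorem integrable_of_norm_sub_le {ρ : Measure E} [IsFiniteMeasure ρ]
    (hρ : Integrable (fun x => ‖x‖) ρ) (h : ∀ x y, ‖g x - g y‖ ≤ L * ‖x - y‖) :
    Integrable g ρ := by
  refine ((integrable_const ‖g 0‖).add (hρ.const_mul L)).mono'
    (continuous_of_norm_sub_le h).aestronglyMeasurable (.of_forall fun x => ?_)
  show ‖g x‖ ≤ ‖g 0‖ + L * ‖x‖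
  have := h x 0
  rw [sub_zero] at this
  linarith [norm_le_norm_sub_add (g x) (g 0)]

end Lipschitz

structure IsCoupling {α β : Type*} [MeasurableSpace α] [MeasurableSpace β]
    (π : Measure (α × β)) (μ : Measure α) (ν : Measure β) : Prop where
  isProbabilityMeasure : IsProbabilityMeasure π
  map_fst : π.map Prod.fst = μ
  map_snd : π.map Prod.snd = ν

namespace IsCoupling

section

variable {α β : Type*} [MeasurableSpace α] [MeasurableSpace β]
  {π : Measure (α × β)} {μ : Measure α} {ν : Measure β}

theorem prod [IsProbabilityMeasure μ] [IsProbabilityMeasure ν] : IsCoupling (μ.prod ν) μ ν :=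
  ⟨inferInstance, Measure.map_fst_prod.trans (by simp), Measure.map_snd_prod.trans (by simp)⟩

theorem map_prodMap {γ δ : Type*} [MeasurableSpace γ] [MeasurableSpace δ] (hπ : IsCoupling π μ ν)
    {T : α → γ} {S : β → δ} (hT : Measurable T) (hS : Measurable S) :
    IsCoupling (π.map (Prod.map T S)) (μ.map T) (ν.map S) := by
  have := hπ.isProbabilityMeasure
  refine ⟨Measure.isProbabilityMeasure_map (hT.prodMap hS).aemeasurable, ?_, ?_⟩
  · rw [Measure.map_map measurable_fst (hT.prodMap hS), ← hπ.map_fst,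
      Measure.map_map hT measurable_fst]
    rfl
  · rw [Measure.map_map measurable_snd (hT.prodMap hS), ← hπ.map_snd,
      Measure.map_map hS measurable_snd]
    rfl

variable {E : Type*} [NormedAddCommGroup E]

theorem integrable_comp_fst (hπ : IsCoupling π μ ν) {f : α → E} (hf : Integrable f μ) :
    Integrable (fun p => f p.1) π := by
  rw [← hπ.map_fst] at hf
  exact hf.comp_measurable measurable_fst

theorem integrable_comp_snd (hπ : IsCoupling π μ ν) {f : β → E} (hf : Integrable f ν) :
    Integrable (fun p => f p.2) π := by
  rw [← hπ.map_snd] at hf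
  exact hf.comp_measurable measurable_snd

variable [NormedSpace ℝ E]

theorem integral_comp_fst (hπ : IsCoupling π μ ν) {f : α → E} (hf : AEStronglyMeasurable f μ) :
    ∫ p, f p.1 ∂π = ∫ x, f x ∂μ := by
  rw [← hπ.map_fst] at hf ⊢
  exact (integral_map measurable_fst.aemeasurable hf).symm

theorem integral_comp_snd (hπ : IsCoupling π μ ν) {f : β → E} (hf : AEStronglyMeasurable f ν) :
    ∫ p, f p.2 ∂π = ∫ x, f x ∂ν := by
  rw [← hπ.map_snd] at hf ⊢
  exact (integral_map measurable_snd.aemeasurable hf).symm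

end


section

variable {E G : Type*} [NormedAddCommGroup E] [MeasurableSpace E] [NormedAddCommGroup G]
  [NormedSpace ℝ G] {π : Measure (E × E)} {μ ν : Measure E}

theorem norm_integral_sub_integral_le (hπ : IsCoupling π μ ν) {g : E → G} {L : ℝ}
    (hgμ : Integrable g μ) (hgν : Integrable g ν)
    (hcost : Integrable (fun p : E × E => ‖p.1 - p.2‖) π)
    (h : ∀ x y, ‖g x - g y‖ ≤ L * ‖x - y‖) :
    ‖∫ x, g x ∂μ - ∫ x, g x ∂ν‖ ≤ L * ∫ p, ‖p.1 - p.2‖ ∂π := by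
  rw [← hπ.integral_comp_fst hgμ.1, ← hπ.integral_comp_snd hgν.1,
    ← integral_sub (hπ.integrable_comp_fst hgμ) (hπ.integrable_comp_snd hgν),
    ← integral_const_mul]
  exact norm_integral_le_of_norm_le (hcost.const_mul L) (.of_forall fun p => h p.1 p.2)

variable [BorelSpace E] [SecondCountableTopology E]

theorem integrable_norm_sub (hπ : IsCoupling π μ ν) (hμ : Integrable (fun x => ‖x‖) μ)
    (hν : Integrable (fun x => ‖x‖) ν) : Integrable (fun p : E × E => ‖p.1 - p.2‖) π :=
  ((hπ.integrable_comp_fst hμ).add (hπ.integrable_comp_snd hν)).mono'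
    (by fun_prop) (.of_forall fun p => by simpa using norm_sub_le p.1 p.2)

end

end IsCoupling

theorem norm_integral_sub_integral_le_of_norm_sub_le {E Z G : Type*} [NormedAddCommGroup E]
    [MeasurableSpace E] [NormedAddCommGroup Z] [NormedAddCommGroup G] [NormedSpace ℝ G]
    {ρ : Measure E} [IsProbabilityMeasure ρ] (hρ : Integrable (fun x => ‖x‖) ρ)
    {F : E → Z → G} {c : ℝ} (hF : ∀ z, Integrable (F · z) ρ)
    (hlip : ∀ x z₁ z₂, ‖F x z₁ - F x z₂‖ ≤ c * (1 + ‖x‖) * ‖z₁ - z₂‖) (z₁ z₂ : Z) :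
    ‖∫ x, F x z₁ ∂ρ - ∫ x, F x z₂ ∂ρ‖ ≤ c * (1 + ∫ x, ‖x‖ ∂ρ) * ‖z₁ - z₂‖ := by
  have hbound : Integrable (fun x => c * (1 + ‖x‖) * ‖z₁ - z₂‖) ρ :=
    (((integrable_const 1).add hρ).const_mul c).mul_const _
  rw [← integral_sub (hF z₁) (hF z₂)]
  calc ‖∫ x, F x z₁ - F x z₂ ∂ρ‖ ≤ ∫ x, c * (1 + ‖x‖) * ‖z₁ - z₂‖ ∂ρ :=
        norm_integral_le_of_norm_le hbound (.of_forall fun x => hlip x z₁ z₂)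
    _ = c * (1 + ∫ x, ‖x‖ ∂ρ) * ‖z₁ - z₂‖ := by
        rw [integral_mul_const, integral_const_mul, integral_add (integrable_const 1) hρ]
        simp

theorem norm_add_smul_sub_add_smul_le {E : Type*} [NormedAddCommGroup E] [NormedSpace ℝ E]
    {ε : ℝ} (hε : 0 ≤ ε) (x z a b : E) :
    ‖(x + ε • a) - (z + ε • b)‖ ≤ ‖x - z‖ + ε * ‖a - b‖ := by
  rw [add_sub_add_comm, ← smul_sub]
  refine (norm_add_le _ _).trans_eq ?_
  rw [norm_smul, Real.norm_of_nonneg hε]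


section Transport

variable {E : Type*} [NormedAddCommGroup E] [NormedSpace ℝ E] [MeasurableSpace E] [BorelSpace E]
  [SecondCountableTopology E] {F : E → E → E} {c₁ c₂ : ℝ}

theorem continuous_add_smul_integral {ρ : Measure E} [IsProbabilityMeasure ρ]
    (hρ : Integrable (fun x => ‖x‖) ρ)
    (hlip₁ : ∀ x z₁ z₂, ‖F x z₁ - F x z₂‖ ≤ c₁ * (1 + ‖x‖) * ‖z₁ - z₂‖)
    (hlip₂ : ∀ x₁ x₂ z, ‖F x₁ z - F x₂ z‖ ≤ c₂ * (1 + ‖z‖) * ‖x₁ - x₂‖) (ε : ℝ) :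
    Continuous fun z => z + ε • ∫ x, F x z ∂ρ :=
  continuous_id.add <| (continuous_of_norm_sub_le <| norm_integral_sub_integral_le_of_norm_sub_le
    hρ (fun z => integrable_of_norm_sub_le hρ fun x₁ x₂ => hlip₂ x₁ x₂ z) hlip₁).const_smul ε

theorem integral_norm_add_smul_integral_sub_le {ε : ℝ} (hε : 0 ≤ ε)
    {π : Measure (E × E)} {μ ν : Measure E} [IsProbabilityMeasure μ] [IsProbabilityMeasure ν]
    (hπ : IsCoupling π μ ν)
    (hμ : Integrable (fun x => ‖x‖) μ) (hν : Integrable (fun x => ‖x‖) ν)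
    (hlip₁ : ∀ x z₁ z₂, ‖F x z₁ - F x z₂‖ ≤ c₁ * (1 + ‖x‖) * ‖z₁ - z₂‖)
    (hlip₂ : ∀ x₁ x₂ z, ‖F x₁ z - F x₂ z‖ ≤ c₂ * (1 + ‖z‖) * ‖x₁ - x₂‖) :
    ∫ p, ‖(p.1 + ε • ∫ x, F x p.1 ∂μ) - (p.2 + ε • ∫ x, F x p.2 ∂ν)‖ ∂π ≤
      (∫ p, ‖p.1 - p.2‖ ∂π) * (1 + ε * c₁ * (1 + ∫ x, ‖x‖ ∂μ) + ε * c₂ * (1 + ∫ x, ‖x‖ ∂ν)) := by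
  have := hπ.isProbabilityMeasure
  have hF : ∀ {ρ : Measure E} [IsFiniteMeasure ρ], Integrable (fun x => ‖x‖) ρ →
      ∀ z, Integrable (F · z) ρ :=
    fun hρ z => integrable_of_norm_sub_le hρ fun x₁ x₂ => hlip₂ x₁ x₂ z
  have hcost := hπ.integrable_norm_sub hμ hν
  set C := ∫ p, ‖p.1 - p.2‖ ∂π
  set a := 1 + ε * c₁ * (1 + ∫ x, ‖x‖ ∂μ)
  have hpt : ∀ x z, ‖(x + ε • ∫ x', F x' x ∂μ) - (z + ε • ∫ x', F x' z ∂ν)‖ ≤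
      a * ‖x - z‖ + ε * c₂ * C * (1 + ‖z‖) := by
    intro x z
    have hμ_lip := norm_integral_sub_integral_le_of_norm_sub_le hμ (hF hμ) hlip₁ x z
    have hμν := hπ.norm_integral_sub_integral_le (hF hμ z) (hF hν z) hcost
      fun x₁ x₂ => hlip₂ x₁ x₂ z
    calc _ ≤ ‖x - z‖ + ε * (‖∫ x', F x' x ∂μ - ∫ x', F x' z ∂μ‖
          + ‖∫ x', F x' z ∂μ - ∫ x', F x' z ∂ν‖) :=
          (norm_add_smul_sub_add_smul_le hε _ _ _ _).trans
            (by gcongr; exact norm_sub_le_norm_sub_add_norm_sub _ _ _)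
      _ ≤ ‖x - z‖ + ε * (c₁ * (1 + ∫ x, ‖x‖ ∂μ) * ‖x - z‖ + c₂ * (1 + ‖z‖) * C) := by gcongr
      _ = _ := by ring
  have hmoment : Integrable (fun p : E × E => 1 + ‖p.2‖) π :=
    (integrable_const 1).add (hπ.integrable_comp_snd hν)
  calc _ ≤ ∫ p, (a * ‖p.1 - p.2‖ + ε * c₂ * C * (1 + ‖p.2‖)) ∂π :=
        integral_mono_of_nonneg (.of_forall fun _ => norm_nonneg _)
          ((hcost.const_mul a).add (hmoment.const_mul _)) (.of_forall fun p => hpt p.1 p.2)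
    _ = a * C + ε * c₂ * C * (1 + ∫ x, ‖x‖ ∂ν) := by
        rw [integral_add (hcost.const_mul a) (hmoment.const_mul _), integral_const_mul,
          integral_const_mul, integral_add (integrable_const 1) (hπ.integrable_comp_snd hν),
          hπ.integral_comp_snd hν.1]
        simp [C]
    _ = _ := by ring

end Transport

section Wasserstein

variable {d : ℕ} {μ ν : Measure (EuclideanSpace ℝ (Fin d))}

theorem W1_le_integral {π : Measure (EuclideanSpace ℝ (Fin d) × EuclideanSpace ℝ (Fin d))}
    (hπ : IsCoupling π μ ν) : W1 μ ν ≤ ∫ p, ‖p.1 - p.2‖ ∂π :=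
  csInf_le ⟨0, by rintro _ ⟨π, -, -, -, rfl⟩; exact integral_nonneg fun _ => norm_nonneg _⟩
    ⟨π, hπ.1, hπ.2, hπ.3, rfl⟩

theorem W1_map_le_integral {π : Measure (EuclideanSpace ℝ (Fin d) × EuclideanSpace ℝ (Fin d))}
    (hπ : IsCoupling π μ ν) {T S : EuclideanSpace ℝ (Fin d) → EuclideanSpace ℝ (Fin d)}
    (hT : Measurable T) (hS : Measurable S) :
    W1 (μ.map T) (ν.map S) ≤ ∫ p, ‖T p.1 - S p.2‖ ∂π := by
  have := W1_le_integral (hπ.map_prodMap hT hS)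
  rwa [integral_map (hT.prodMap hS).aemeasurable (by fun_prop)] at this

theorem le_W1_mul [IsProbabilityMeasure μ] [IsProbabilityMeasure ν] {a K : ℝ} (hK : 0 ≤ K)
    (h : ∀ π, IsCoupling π μ ν → a ≤ (∫ p, ‖p.1 - p.2‖ ∂π) * K) : a ≤ W1 μ ν * K := by
  rw [W1, mul_comm, ← smul_eq_mul, ← Real.sInf_smul_of_nonneg hK]
  refine le_csInf (Set.Nonempty.smul_set ⟨_, _, IsCoupling.prod.1, IsCoupling.prod.2,
    IsCoupling.prod.3, rfl⟩) ?_
  rintro _ ⟨_, ⟨π, h₁, h₂, h₃, rfl⟩, rfl⟩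
  exact (h π ⟨h₁, h₂, h₃⟩).trans_eq (mul_comm _ _)

end Wasserstein

theorem stmt_10_general {d : ℕ}
    (μ ν : Measure (EuclideanSpace ℝ (Fin d)))
    [IsProbabilityMeasure μ] [IsProbabilityMeasure ν]
    (hμ : Integrable (fun x => ‖x‖) μ) (hν : Integrable (fun x => ‖x‖) ν)
    (F : EuclideanSpace ℝ (Fin d) → EuclideanSpace ℝ (Fin d) → EuclideanSpace ℝ (Fin d))
    (ε c₁ c₂ : ℝ) (hε : 0 < ε) (hc₁ : 0 < c₁) (hc₂ : 0 < c₂)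
    (hlip₁ : ∀ x z₁ z₂, ‖F x z₁ - F x z₂‖ ≤ c₁ * (1 + ‖x‖) * ‖z₁ - z₂‖)
    (hlip₂ : ∀ x₁ x₂ z, ‖F x₁ z - F x₂ z‖ ≤ c₂ * (1 + ‖z‖) * ‖x₁ - x₂‖)
    (Tμ Tν : EuclideanSpace ℝ (Fin d) → EuclideanSpace ℝ (Fin d))
    (hTμ : ∀ x, Tμ x = x + ε • ∫ x', F x' x ∂μ)
    (hTν : ∀ z, Tν z = z + ε • ∫ x', F x' z ∂ν) :
    W1 (μ.map Tμ) (ν.map Tν) ≤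
      W1 μ ν * (1 + ε * c₁ * (1 + ∫ x, ‖x‖ ∂μ) + ε * c₂ * (1 + ∫ x, ‖x‖ ∂ν)) := by
  have hTμ_cont : Continuous Tμ := by
    rw [funext hTμ]; exact continuous_add_smul_integral hμ hlip₁ hlip₂ ε
  have hTν_cont : Continuous Tν := by
    rw [funext hTν]; exact continuous_add_smul_integral hν hlip₁ hlip₂ ε
  refine le_W1_mul (by positivity) fun π hπ => ?_
  calc W1 (μ.map Tμ) (ν.map Tν) ≤ ∫ p, ‖Tμ p.1 - Tν p.2‖ ∂π :=
        W1_map_le_integral hπ hTμ_cont.measurable hTν_cont.measurable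
    _ ≤ _ := by
        simp only [hTμ, hTν]
        exact integral_norm_add_smul_integral_sub_le hε.le hπ hμ hν hlip₁ hlip₂

theorem stmt_10 {d : ℕ}
    (μ ν : Measure (EuclideanSpace ℝ (Fin d)))
    [IsProbabilityMeasure μ] [IsProbabilityMeasure ν]
    (hμ : Integrable (fun x => ‖x‖) μ) (hν : Integrable (fun x => ‖x‖) ν)
    (F : EuclideanSpace ℝ (Fin d) → EuclideanSpace ℝ (Fin d) → EuclideanSpace ℝ (Fin d))
    (hFmeas : Measurable (Function.uncurry F))
    (ε c₁ c₂ : ℝ) (hε : 0 < ε) (hc₁ : 0 < c₁) (hc₂ : 0 < c₂)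
    (hlip₁ : ∀ x z₁ z₂, ‖F x z₁ - F x z₂‖ ≤ c₁ * (1 + ‖x‖) * ‖z₁ - z₂‖)
    (hlip₂ : ∀ x₁ x₂ z, ‖F x₁ z - F x₂ z‖ ≤ c₂ * (1 + ‖z‖) * ‖x₁ - x₂‖)
    (Tμ Tν : EuclideanSpace ℝ (Fin d) → EuclideanSpace ℝ (Fin d))
    (hTμ : ∀ x, Tμ x = x + ε • ∫ x', F x' x ∂μ)
    (hTν : ∀ z, Tν z = z + ε • ∫ x', F x' z ∂ν) :
    W1 (μ.map Tμ) (ν.map Tν) ≤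
      W1 μ ν * (1 + ε * c₁ * (1 + ∫ x, ‖x‖ ∂μ) + ε * c₂ * (1 + ∫ x, ‖x‖ ∂ν)) :=
  stmt_10_general μ ν hμ hν F ε c₁ c₂ hε hc₁ hc₂ hlip₁ hlip₂ Tμ Tν hTμ hTν
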